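/- arXiv:2512.01347 — 2 statements merged into one kernel-verified Lean document; each statement's English description precedes it below -/
import Mathlib

section
/- Let γ : I → ℝ³ and γ̃ : J → ℝ³ be non-degenerate curves parametrized by arc length with curvatures and torsions (κ, τ) and (κ̃, τ̃), let T = (t_ij) be the frame matrix of the Frenet framed curves (γ, n, b) and (γ̃, ñ, b̃), suppose θ : I × J → ℝ is smooth with t₃₂ cos θ + t₃₁ sin θ = 0 on I × J, and let p₀ = (u₀, v₀) satisfy γ′(u₀) × γ̃′(v₀) = 0. Then: (1) sin θ(p₀) = 0 and cos θ(p₀) = ±1; (2) t₁₂(p₀) = 0; (3) θ_u(p₀) = τ(u₀)/2; (4) κ̃(v₀)(τ(u₀) − θ_u(p₀))t₁₁(p₀) + θ_v(p₀)κ(u₀)t₃₃(p₀) = 0; (5) τ̃(v₀)t₂₂(p₀) + 2t₁₁(p₀)θ_v(p₀) = 0. -/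
open Matrix Real

noncomputable section

abbrev V3 : Type := Fin 3 → ℝ

def cross3 (a b : V3) : V3 := crossProduct a b

def mu3 (nu1 nu2 : ℝ → V3) (t : ℝ) : V3 := cross3 (nu1 t) (nu2 t)

/-- A framed curve on a set `I`. -/
def IsFramedCurve (I : Set ℝ) (g nu1 nu2 : ℝ → V3) : Prop :=
  ContDiffOn ℝ (⊤ : ℕ∞) g I ∧ ContDiffOn ℝ (⊤ : ℕ∞) nu1 I ∧ ContDiffOn ℝ (⊤ : ℕ∞) nu2 I ∧
  ∀ t ∈ I, nu1 t ⬝ᵥ nu1 t = 1 ∧ nu2 t ⬝ᵥ nu2 t = 1 ∧ nu1 t ⬝ᵥ nu2 t = 0 ∧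
    deriv g t ⬝ᵥ nu1 t = 0 ∧ deriv g t ⬝ᵥ nu2 t = 0

def curvL (nu1 nu2 : ℝ → V3) (t : ℝ) : ℝ := deriv nu1 t ⬝ᵥ nu2 t
def curvM (nu1 nu2 : ℝ → V3) (t : ℝ) : ℝ := deriv nu1 t ⬝ᵥ mu3 nu1 nu2 t
def curvN (nu1 nu2 : ℝ → V3) (t : ℝ) : ℝ := deriv nu2 t ⬝ᵥ mu3 nu1 nu2 t
def curvA (g nu1 nu2 : ℝ → V3) (t : ℝ) : ℝ := deriv g t ⬝ᵥ mu3 nu1 nu2 t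

/-- Frame matrix of two framed curves. -/
def frameMatrix (nu1 nu2 w1 w2 : ℝ → V3) (u v : ℝ) : Matrix (Fin 3) (Fin 3) ℝ :=
  Matrix.of fun i j => ![w1 v, w2 v, mu3 w1 w2 v] i ⬝ᵥ ![nu1 u, nu2 u, mu3 nu1 nu2 u] j

def det3 (a b c : V3) : ℝ := Matrix.det (Matrix.of ![a, b, c])

def pduV (f : ℝ → ℝ → V3) (u v : ℝ) : V3 := deriv (fun u' => f u' v) u
def pdvV (f : ℝ → ℝ → V3) (u v : ℝ) : V3 := deriv (fun v' => f u v') v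
def pduS (f : ℝ → ℝ → ℝ) (u v : ℝ) : ℝ := deriv (fun u' => f u' v) u
def pdvS (f : ℝ → ℝ → ℝ) (u v : ℝ) : ℝ := deriv (fun v' => f u v') v

/-- `A`-equivalence of the germ of `f` at `p` with the germ of `g` at `0`. -/
def AEquivAt (f : ℝ × ℝ → V3) (p : ℝ × ℝ) (g : ℝ × ℝ → V3) : Prop :=
  ∃ (U : Set (ℝ × ℝ)) (W : Set V3) (φ φi : ℝ × ℝ → ℝ × ℝ) (Ψ Ψi : V3 → V3),
    IsOpen U ∧ p ∈ U ∧ IsOpen W ∧ f p ∈ W ∧ (∀ q ∈ U, f q ∈ W) ∧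
    IsOpen (φ '' U) ∧ IsOpen (Ψ '' W) ∧
    ContDiffOn ℝ (⊤ : ℕ∞) φ U ∧ ContDiffOn ℝ (⊤ : ℕ∞) φi (φ '' U) ∧
    (∀ q ∈ U, φi (φ q) = q) ∧ (∀ q ∈ φ '' U, φ (φi q) = q) ∧
    ContDiffOn ℝ (⊤ : ℕ∞) Ψ W ∧ ContDiffOn ℝ (⊤ : ℕ∞) Ψi (Ψ '' W) ∧
    (∀ y ∈ W, Ψi (Ψ y) = y) ∧ (∀ y ∈ Ψ '' W, Ψ (Ψi y) = y) ∧
    φ p = 0 ∧ Ψ (f p) = g 0 ∧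
    ∀ q ∈ U, Ψ (f q) = g (φ q)

def crossCapModel : ℝ × ℝ → V3 := fun p => ![p.1, p.1 * p.2, p.2 ^ 2]
def S1PlusModel : ℝ × ℝ → V3 := fun p => ![p.1, p.2 ^ 2, p.2 * (p.1 ^ 2 + p.2 ^ 2)]
def S1MinusModel : ℝ × ℝ → V3 := fun p => ![p.1, p.2 ^ 2, p.2 * (p.1 ^ 2 - p.2 ^ 2)]
def cuspidalEdgeModel : ℝ × ℝ → V3 := fun p => ![p.1, p.2 ^ 2, p.2 ^ 3]
def swallowtailModel : ℝ × ℝ → V3 :=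
  fun p => ![p.1, 4 * p.2 ^ 3 + 2 * p.1 * p.2, 3 * p.2 ^ 4 + p.1 * p.2 ^ 2]
def cuspidalCrossCapModel : ℝ × ℝ → V3 := fun p => ![p.1, p.2 ^ 2, p.1 * p.2 ^ 3]
def D4PlusModel : ℝ × ℝ → V3 :=
  fun p => ![p.1 * p.2, p.1 ^ 2 + 3 * p.2 ^ 2, p.1 ^ 2 * p.2 + p.2 ^ 3]
def D4MinusModel : ℝ × ℝ → V3 :=
  fun p => ![p.1 * p.2, p.1 ^ 2 - 3 * p.2 ^ 2, p.1 ^ 2 * p.2 - p.2 ^ 3]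

def HasCrossCapAt (f : ℝ × ℝ → V3) (p : ℝ × ℝ) : Prop := AEquivAt f p crossCapModel
def HasS1PlusAt (f : ℝ × ℝ → V3) (p : ℝ × ℝ) : Prop := AEquivAt f p S1PlusModel
def HasS1MinusAt (f : ℝ × ℝ → V3) (p : ℝ × ℝ) : Prop := AEquivAt f p S1MinusModel
def HasCuspidalEdgeAt (f : ℝ × ℝ → V3) (p : ℝ × ℝ) : Prop := AEquivAt f p cuspidalEdgeModel
def HasSwallowtailAt (f : ℝ × ℝ → V3) (p : ℝ × ℝ) : Prop := AEquivAt f p swallowtailModel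
def HasCuspidalCrossCapAt (f : ℝ × ℝ → V3) (p : ℝ × ℝ) : Prop := AEquivAt f p cuspidalCrossCapModel
def HasD4PlusAt (f : ℝ × ℝ → V3) (p : ℝ × ℝ) : Prop := AEquivAt f p D4PlusModel
def HasD4MinusAt (f : ℝ × ℝ → V3) (p : ℝ × ℝ) : Prop := AEquivAt f p D4MinusModel

/-- A non-degenerate space curve parametrized by arc length on `I`. -/
def IsUnitSpeedNondeg (I : Set ℝ) (g : ℝ → V3) : Prop :=
  ContDiffOn ℝ (⊤ : ℕ∞) g I ∧ (∀ s ∈ I, deriv g s ⬝ᵥ deriv g s = 1) ∧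
  ∀ s ∈ I, deriv (deriv g) s ≠ 0

def fcurv (g : ℝ → V3) (s : ℝ) : ℝ := Real.sqrt (deriv (deriv g) s ⬝ᵥ deriv (deriv g) s)
def fnor (g : ℝ → V3) (s : ℝ) : V3 := (fcurv g s)⁻¹ • deriv (deriv g) s
def fbin (g : ℝ → V3) (s : ℝ) : V3 := cross3 (deriv g s) (fnor g s)
def ftor (g : ℝ → V3) (s : ℝ) : ℝ :=
  det3 (deriv g s) (deriv (deriv g) s) (deriv (deriv (deriv g)) s) / (fcurv g s) ^ 2

/-- Generalised framed surface on `U ⊆ ℝ²`. -/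
def IsGeneralisedFramedSurface (U : Set (ℝ × ℝ)) (x N1 N2 : ℝ × ℝ → V3) : Prop :=
  ContDiffOn ℝ (⊤ : ℕ∞) x U ∧ ContDiffOn ℝ (⊤ : ℕ∞) N1 U ∧ ContDiffOn ℝ (⊤ : ℕ∞) N2 U ∧
  (∀ p ∈ U, N1 p ⬝ᵥ N1 p = 1 ∧ N2 p ⬝ᵥ N2 p = 1 ∧ N1 p ⬝ᵥ N2 p = 0) ∧
  ∃ A B : ℝ × ℝ → ℝ, ContDiffOn ℝ (⊤ : ℕ∞) A U ∧ ContDiffOn ℝ (⊤ : ℕ∞) B U ∧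
    ∀ p ∈ U, cross3 (deriv (fun u => x (u, p.2)) p.1) (deriv (fun v => x (p.1, v)) p.2)
      = A p • N1 p + B p • N2 p

/-- Framed surface on `U ⊆ ℝ²`. -/
def IsFramedSurface (U : Set (ℝ × ℝ)) (x nn ss : ℝ × ℝ → V3) : Prop :=
  ContDiffOn ℝ (⊤ : ℕ∞) x U ∧ ContDiffOn ℝ (⊤ : ℕ∞) nn U ∧ ContDiffOn ℝ (⊤ : ℕ∞) ss U ∧
  ∀ p ∈ U, nn p ⬝ᵥ nn p = 1 ∧ ss p ⬝ᵥ ss p = 1 ∧ nn p ⬝ᵥ ss p = 0 ∧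
    deriv (fun u => x (u, p.2)) p.1 ⬝ᵥ nn p = 0 ∧ deriv (fun v => x (p.1, v)) p.2 ⬝ᵥ nn p = 0

/-- The vector field `η = -α̃(v) ∂/∂u + α(u) t₃₃(u,v) ∂/∂v` applied to a map `f`. -/
def etaD (g nu1 nu2 gt w1 w2 : ℝ → V3) (f : ℝ → ℝ → V3) (u v : ℝ) : V3 :=
  (-(curvA gt w1 w2 v)) • pduV f u v
    + (curvA g nu1 nu2 u * frameMatrix nu1 nu2 w1 w2 u v 2 2) • pdvV f u v

/-- `φ = det(ξx, ηx, ηηx)` for the translation surface `x(u,v) = γ(u) + γ̃(v)`. -/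
def phiD (g nu1 nu2 gt w1 w2 : ℝ → V3) (u v : ℝ) : ℝ :=
  det3 (pduV (fun a b => g a + gt b) u v)
    (etaD g nu1 nu2 gt w1 w2 (fun a b => g a + gt b) u v)
    (etaD g nu1 nu2 gt w1 w2 (etaD g nu1 nu2 gt w1 w2 (fun a b => g a + gt b)) u v)

/-- `n(u,v) = sin θ(u,v) ν₁(u) + cos θ(u,v) ν₂(u)`. -/
def nvecD (nu1 nu2 : ℝ → V3) (θ : ℝ → ℝ → ℝ) (u v : ℝ) : V3 :=
  Real.sin (θ u v) • nu1 u + Real.cos (θ u v) • nu2 u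

/-- `t = n × μ`. -/
def tvecD (nu1 nu2 : ℝ → V3) (θ : ℝ → ℝ → ℝ) (u v : ℝ) : V3 :=
  cross3 (nvecD nu1 nu2 θ u v) (mu3 nu1 nu2 u)

lemma dot3 (a b : V3) : a ⬝ᵥ b = a 0 * b 0 + a 1 * b 1 + a 2 * b 2 := by
  simp [dotProduct, Fin.sum_univ_three]

lemma cross3_apply (a b : V3) (i : Fin 3) :
    cross3 a b i = ![a 1 * b 2 - a 2 * b 1, a 2 * b 0 - a 0 * b 2, a 0 * b 1 - a 1 * b 0] i := by
  simp [cross3, crossProduct]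

lemma cross3_add_right (a x y : V3) : cross3 a (x + y) = cross3 a x + cross3 a y := by
  funext i; fin_cases i <;> simp [cross3_apply, Matrix.cons_val_succ, Pi.add_apply] <;> ring

lemma cramer3 (t n w : V3) :
    ((t ⬝ᵥ t) * (n ⬝ᵥ n) - (t ⬝ᵥ n) ^ 2) • w
      = (w ⬝ᵥ ((n ⬝ᵥ n) • t - (t ⬝ᵥ n) • n)) • t
        + (w ⬝ᵥ ((t ⬝ᵥ t) • n - (t ⬝ᵥ n) • t)) • n
        + (w ⬝ᵥ cross3 t n) • cross3 t n := by
  funext i; fin_cases i <;> simp [cross3_apply, dot3, Matrix.cons_val_succ] <;> ring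

lemma decomp3 {t n : V3} (w : V3) (h1 : t ⬝ᵥ t = 1) (h2 : n ⬝ᵥ n = 1) (h3 : t ⬝ᵥ n = 0) :
    w = (w ⬝ᵥ t) • t + (w ⬝ᵥ n) • n + (w ⬝ᵥ cross3 t n) • cross3 t n := by
  have c := cramer3 t n w
  rw [h1, h2, h3] at c
  simpa using c

lemma triple3 (a b c : V3) : c ⬝ᵥ cross3 a b = det3 a b c := by
  simp [det3, Matrix.det_fin_three, dot3, cross3_apply, Matrix.cons_val_succ]; ring

lemma dot_cross_left (a b : V3) : a ⬝ᵥ cross3 a b = 0 := by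
  simp [dot3, cross3_apply]; ring

lemma dot_cross_right (a b : V3) : b ⬝ᵥ cross3 a b = 0 := by
  simp [dot3, cross3_apply]; ring

lemma lagrange3 (a b : V3) :
    cross3 a b ⬝ᵥ cross3 a b = (a ⬝ᵥ a) * (b ⬝ᵥ b) - (a ⬝ᵥ b) ^ 2 := by
  simp [dot3, cross3_apply]; ring

lemma cross_cross_left (t n : V3) : cross3 n (cross3 t n) = (n ⬝ᵥ n) • t - (t ⬝ᵥ n) • n := by
  funext i; fin_cases i <;> simp [cross3_apply, dot3, Matrix.cons_val_succ] <;> ring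

lemma cross_cross_self (t n : V3) : cross3 t (cross3 t n) = (t ⬝ᵥ n) • t - (t ⬝ᵥ t) • n := by
  funext i; fin_cases i <;> simp [cross3_apply, dot3, Matrix.cons_val_succ] <;> ring

lemma cross3_smul_right (c : ℝ) (a b : V3) : cross3 a (c • b) = c • cross3 a b := by
  funext i; fin_cases i <;> simp [cross3_apply, Matrix.cons_val_succ] <;> ring

lemma cross3_smul_left (c : ℝ) (a b : V3) : cross3 (c • a) b = c • cross3 a b := by
  funext i; fin_cases i <;> simp [cross3_apply, Matrix.cons_val_succ] <;> ring

lemma cross3_self (a : V3) : cross3 a a = 0 := by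
  funext i; fin_cases i <;> simp [cross3_apply, Matrix.cons_val_succ] <;> ring

lemma dot_self_nonneg3 (a : V3) : 0 ≤ a ⬝ᵥ a := by
  rw [dot3]
  nlinarith [mul_self_nonneg (a 0), mul_self_nonneg (a 1), mul_self_nonneg (a 2)]

lemma eq_zero_of_dot_self (a : V3) (h : a ⬝ᵥ a = 0) : a = 0 := by
  rw [dot3] at h
  funext i; fin_cases i
  · show a 0 = 0
    nlinarith [mul_self_nonneg (a 0), mul_self_nonneg (a 1), mul_self_nonneg (a 2)]
  · show a 1 = 0
    nlinarith [mul_self_nonneg (a 0), mul_self_nonneg (a 1), mul_self_nonneg (a 2)]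
  · show a 2 = 0
    nlinarith [mul_self_nonneg (a 0), mul_self_nonneg (a 1), mul_self_nonneg (a 2)]

lemma dot_self_pos3 {a : V3} (h : a ≠ 0) : 0 < a ⬝ᵥ a :=
  lt_of_le_of_ne (dot_self_nonneg3 a) (fun e => h (eq_zero_of_dot_self a e.symm))

lemma parallel_unit {a b : V3} (ha : a ⬝ᵥ a = 1) (hb : b ⬝ᵥ b = 1) (hc : cross3 a b = 0) :
    (a ⬝ᵥ b) ^ 2 = 1 ∧ b = (a ⬝ᵥ b) • a := by
  have lag := lagrange3 a b
  rw [hc, ha, hb] at lag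
  simp only [zero_dotProduct] at lag
  constructor
  · linarith
  · have hz : (b - (a ⬝ᵥ b) • a) ⬝ᵥ (b - (a ⬝ᵥ b) • a) = 0 := by
      have e : ∀ x y : V3, (x - y) ⬝ᵥ (x - y) = x ⬝ᵥ x - 2 * (x ⬝ᵥ y) + y ⬝ᵥ y := by
        intro x y; simp [dot3, Pi.sub_apply]; try ring
      rw [e]
      have e1 : b ⬝ᵥ ((a ⬝ᵥ b) • a) = (a ⬝ᵥ b) * (b ⬝ᵥ a) := by simp [dot3]; try ring
      have e2 : ((a ⬝ᵥ b) • a) ⬝ᵥ ((a ⬝ᵥ b) • a) = (a ⬝ᵥ b) ^ 2 * (a ⬝ᵥ a) := by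
        simp [dot3]; try ring
      have e3 : b ⬝ᵥ a = a ⬝ᵥ b := by simp [dot3]; try ring
      rw [e1, e2, e3, ha, hb]
      nlinarith [lag]
    have := eq_zero_of_dot_self _ hz
    have := sub_eq_zero.1 this
    exact this

lemma HasDerivAt.dot3 {f g : ℝ → V3} {f' g' : V3} {x : ℝ}
    (hf : HasDerivAt f f' x) (hg : HasDerivAt g g' x) :
    HasDerivAt (fun t => f t ⬝ᵥ g t) (f' ⬝ᵥ g x + f x ⬝ᵥ g') x := by
  have hf' := hasDerivAt_pi.1 hf
  have hg' := hasDerivAt_pi.1 hg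
  simp only [_root_.dot3]
  refine ((((hf' 0).mul (hg' 0)).add ((hf' 1).mul (hg' 1))).add ((hf' 2).mul (hg' 2))).congr_deriv ?_
  ring

lemma HasDerivAt.cross3' {f g : ℝ → V3} {f' g' : V3} {x : ℝ}
    (hf : HasDerivAt f f' x) (hg : HasDerivAt g g' x) :
    HasDerivAt (fun t => cross3 (f t) (g t)) (cross3 f' (g x) + cross3 (f x) g') x := by
  have hf' := hasDerivAt_pi.1 hf
  have hg' := hasDerivAt_pi.1 hg
  rw [hasDerivAt_pi]
  intro i
  fin_cases i
  · have h2 : HasDerivAt (fun t : ℝ => cross3 (f t) (g t) 0)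
        (f' 1 * g x 2 + f x 1 * g' 2 - (f' 2 * g x 1 + f x 2 * g' 1)) x :=
      HasDerivAt.congr_of_eventuallyEq
        (((hf' 1).mul (hg' 2)).sub (((hf' 2).mul (hg' 1))))
        (Filter.Eventually.of_forall (fun t => by simp [cross3_apply]))
    refine (h2).congr_deriv ?_
    simp [cross3_apply]; ring
  · have h2 : HasDerivAt (fun t : ℝ => cross3 (f t) (g t) 1)
        (f' 2 * g x 0 + f x 2 * g' 0 - (f' 0 * g x 2 + f x 0 * g' 2)) x :=
      HasDerivAt.congr_of_eventuallyEq
        (((hf' 2).mul (hg' 0)).sub (((hf' 0).mul (hg' 2))))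
        (Filter.Eventually.of_forall (fun t => by simp [cross3_apply]))
    refine (h2).congr_deriv ?_
    simp [cross3_apply]; ring
  · have h2 : HasDerivAt (fun t : ℝ => cross3 (f t) (g t) 2)
        (f' 0 * g x 1 + f x 0 * g' 1 - (f' 1 * g x 0 + f x 1 * g' 0)) x :=
      HasDerivAt.congr_of_eventuallyEq
        (((hf' 0).mul (hg' 1)).sub (((hf' 1).mul (hg' 0))))
        (Filter.Eventually.of_forall (fun t => by simp [cross3_apply]))
    refine (h2).congr_deriv ?_
    simp [cross3_apply]; ring

lemma diffAt_deriv {f : ℝ → ℝ} {x : ℝ} (h : ContDiffAt ℝ (⊤ : ℕ∞) f x) :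
    DifferentiableAt ℝ (deriv f) x := by
  obtain ⟨u, hu, hcd⟩ := h.contDiffOn (m := 2) (by norm_cast)
    (by intro hh; exact absurd hh (by decide))
  obtain ⟨t, hts, hto, hxt⟩ := mem_nhds_iff.1 hu
  have : ContDiffOn ℝ 1 (deriv f) t :=
    (hcd.mono hts).deriv_of_isOpen hto (by norm_num)
  exact (this.contDiffAt (hto.mem_nhds hxt)).differentiableAt (by norm_num)


lemma constOn_deriv_zero {f : ℝ → ℝ} {c f' u : ℝ} {I : Set ℝ} (hI : IsOpen I) (hu : u ∈ I)
    (hc : ∀ x ∈ I, f x = c) (hf : HasDerivAt f f' u) : f' = 0 := by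
  have heq : f =ᶠ[nhds u] (fun _ => c) := Filter.eventuallyEq_of_mem (hI.mem_nhds hu) hc
  exact hf.unique ((hasDerivAt_const u c).congr_of_eventuallyEq heq)

variable {I : Set ℝ} {g : ℝ → V3} {u : ℝ}

lemma cdOn_deriv (hI : IsOpen I) (h : ContDiffOn ℝ (⊤ : ℕ∞) g I) :
    ContDiffOn ℝ (⊤ : ℕ∞) (deriv g) I :=
  h.deriv_of_isOpen hI (by norm_cast)

lemma hdg1 (hI : IsOpen I) (hg : IsUnitSpeedNondeg I g) (hu : u ∈ I) :
    HasDerivAt (deriv g) (deriv (deriv g) u) u :=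
  ((((cdOn_deriv hI hg.1).contDiffAt (hI.mem_nhds hu)).differentiableAt
    (by norm_cast))).hasDerivAt

lemma hdg2 (hI : IsOpen I) (hg : IsUnitSpeedNondeg I g) (hu : u ∈ I) :
    HasDerivAt (deriv (deriv g)) (deriv (deriv (deriv g)) u) u :=
  ((((cdOn_deriv hI (cdOn_deriv hI hg.1)).contDiffAt (hI.mem_nhds hu)).differentiableAt
    (by norm_cast))).hasDerivAt

lemma hdg3 (hI : IsOpen I) (hg : IsUnitSpeedNondeg I g) (hu : u ∈ I) :
    HasDerivAt (deriv (deriv (deriv g))) (deriv (deriv (deriv (deriv g))) u) u :=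
  ((((cdOn_deriv hI (cdOn_deriv hI (cdOn_deriv hI hg.1))).contDiffAt
    (hI.mem_nhds hu)).differentiableAt (by norm_cast))).hasDerivAt

lemma fcurv_pos (hg : IsUnitSpeedNondeg I g) (hu : u ∈ I) : 0 < fcurv g u :=
  Real.sqrt_pos.2 (dot_self_pos3 (hg.2.2 u hu))

lemma fcurv_sq (_hg : IsUnitSpeedNondeg I g) :
    fcurv g u ^ 2 = deriv (deriv g) u ⬝ᵥ deriv (deriv g) u :=
  Real.sq_sqrt (dot_self_nonneg3 _)

lemma hd_fcurv (hI : IsOpen I) (hg : IsUnitSpeedNondeg I g) (hu : u ∈ I) :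
    HasDerivAt (fcurv g)
      ((deriv (deriv g) u ⬝ᵥ deriv (deriv (deriv g)) u) / fcurv g u) u := by
  have h2 := hdg2 hI hg hu
  have hdd := h2.dot3 h2
  have hpos := dot_self_pos3 (hg.2.2 u hu)
  have hs := (Real.hasDerivAt_sqrt (ne_of_gt hpos)).comp u hdd
  have hs' : HasDerivAt (fcurv g)
      (1 / (2 * Real.sqrt (deriv (deriv g) u ⬝ᵥ deriv (deriv g) u)) *
        (deriv (deriv (deriv g)) u ⬝ᵥ deriv (deriv g) u +
          deriv (deriv g) u ⬝ᵥ deriv (deriv (deriv g)) u)) u := hs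
  convert hs' using 1
  have hκ : fcurv g u = Real.sqrt (deriv (deriv g) u ⬝ᵥ deriv (deriv g) u) := rfl
  have hκne : fcurv g u ≠ 0 := ne_of_gt (fcurv_pos hg hu)
  rw [dotProduct_comm (deriv (deriv (deriv g)) u)]
  rw [← hκ]
  field_simp
  ring

lemma d1_dot_d2 (hI : IsOpen I) (hg : IsUnitSpeedNondeg I g) (hu : u ∈ I) :
    deriv g u ⬝ᵥ deriv (deriv g) u = 0 := by
  have h1 := hdg1 hI hg hu
  have hz := constOn_deriv_zero hI hu hg.2.1 (h1.dot3 h1)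
  rw [dotProduct_comm] at hz
  linarith

lemma d1_dot_d3 (hI : IsOpen I) (hg : IsUnitSpeedNondeg I g) (hu : u ∈ I) :
    deriv g u ⬝ᵥ deriv (deriv (deriv g)) u = -(fcurv g u ^ 2) := by
  have hd := (hdg1 hI hg hu).dot3 (hdg2 hI hg hu)
  have hz := constOn_deriv_zero hI hu (fun x hx => d1_dot_d2 hI hg hx) hd
  have := fcurv_sq (u := u) hg
  linarith [hz, this]

lemma frenet1 (hg : IsUnitSpeedNondeg I g) (hu : u ∈ I) :
    deriv (deriv g) u = fcurv g u • fnor g u := by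
  rw [fnor, smul_smul, mul_inv_cancel₀ (ne_of_gt (fcurv_pos hg hu)), one_smul]

lemma nor_unit (hg : IsUnitSpeedNondeg I g) (hu : u ∈ I) : fnor g u ⬝ᵥ fnor g u = 1 := by
  have h := fcurv_sq (u := u) hg
  have hκne : fcurv g u ≠ 0 := ne_of_gt (fcurv_pos hg hu)
  rw [fnor, smul_dotProduct, dotProduct_smul, ← h]
  rw [smul_eq_mul, smul_eq_mul, ← mul_assoc, ← mul_inv, ← pow_two, inv_mul_cancel₀ (pow_ne_zero 2 hκne)]

lemma t_dot_nor (hI : IsOpen I) (hg : IsUnitSpeedNondeg I g) (hu : u ∈ I) :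
    deriv g u ⬝ᵥ fnor g u = 0 := by
  rw [fnor, dotProduct_smul, d1_dot_d2 hI hg hu]
  simp

lemma t_dot_bin : deriv g u ⬝ᵥ fbin g u = 0 := dot_cross_left _ _

lemma nor_dot_bin : fnor g u ⬝ᵥ fbin g u = 0 := dot_cross_right _ _

lemma mu_eq (hI : IsOpen I) (hg : IsUnitSpeedNondeg I g) (hu : u ∈ I) :
    cross3 (fnor g u) (fbin g u) = deriv g u := by
  rw [fbin, cross_cross_left, nor_unit hg hu, t_dot_nor hI hg hu, one_smul, zero_smul, sub_zero]

lemma hd_fnor (hI : IsOpen I) (hg : IsUnitSpeedNondeg I g) (hu : u ∈ I) :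
    HasDerivAt (fnor g) (-(fcurv g u) • deriv g u + ftor g u • fbin g u) u := by
  have hκne : fcurv g u ≠ 0 := ne_of_gt (fcurv_pos hg hu)
  have hinv := (hd_fcurv hI hg hu).inv hκne
  have hn : HasDerivAt (fnor g)
      ((fcurv g u)⁻¹ • deriv (deriv (deriv g)) u +
        (-((deriv (deriv g) u ⬝ᵥ deriv (deriv (deriv g)) u) / fcurv g u) / fcurv g u ^ 2) •
          deriv (deriv g) u) u := hinv.smul (hdg2 hI hg hu)
  set w := (fcurv g u)⁻¹ • deriv (deriv (deriv g)) u +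
      (-((deriv (deriv g) u ⬝ᵥ deriv (deriv (deriv g)) u) / fcurv g u) / fcurv g u ^ 2) •
        deriv (deriv g) u with hw
  -- dot products of w
  have hwt : w ⬝ᵥ deriv g u = -(fcurv g u) := by
    rw [hw, add_dotProduct, smul_dotProduct, smul_dotProduct,
      dotProduct_comm (deriv (deriv (deriv g)) u) (deriv g u), d1_dot_d3 hI hg hu,
      dotProduct_comm (deriv (deriv g) u) (deriv g u), d1_dot_d2 hI hg hu]
    simp only [smul_eq_mul]
    field_simp
    ring
  have hwn : w ⬝ᵥ fnor g u = 0 := by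
    have hder := hn.dot3 hn
    have hz := constOn_deriv_zero hI hu (fun x hx => nor_unit hg hx) hder
    rw [dotProduct_comm (fnor g u) w] at hz
    linarith
  have hwb : w ⬝ᵥ cross3 (deriv g u) (fnor g u) = ftor g u := by
    have hb : cross3 (deriv g u) (fnor g u)
        = (fcurv g u)⁻¹ • cross3 (deriv g u) (deriv (deriv g) u) := by
      rw [fnor, cross3_smul_right]
    rw [hw, hb, dotProduct_smul, add_dotProduct, smul_dotProduct,
      smul_dotProduct, triple3, dot_cross_right]
    simp only [smul_eq_mul, mul_zero, add_zero]
    rw [ftor, eq_div_iff (pow_ne_zero 2 hκne), pow_two]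
    field_simp
  have hdec := decomp3 w (hg.2.1 u hu) (nor_unit hg hu) (t_dot_nor hI hg hu)
  rw [hwt, hwn, hwb, zero_smul, add_zero] at hdec
  rw [hdec] at hn
  exact hn

lemma hd_fbin (hI : IsOpen I) (hg : IsUnitSpeedNondeg I g) (hu : u ∈ I) :
    HasDerivAt (fbin g) (-(ftor g u) • fnor g u) u := by
  have h := (hdg1 hI hg hu).cross3' (hd_fnor hI hg hu)
  have hval : cross3 (deriv (deriv g) u) (fnor g u)
      + cross3 (deriv g u) (-(fcurv g u) • deriv g u + ftor g u • fbin g u)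
      = -(ftor g u) • fnor g u := by
    rw [frenet1 hg hu, cross3_smul_left, cross3_self, smul_zero]
    rw [cross3_add_right, cross3_smul_right, cross3_smul_right, cross3_self, smul_zero]
    rw [fbin, cross_cross_self, t_dot_nor hI hg hu, hg.2.1 u hu, zero_smul, one_smul, zero_sub]
    rw [smul_neg, zero_add, zero_add, neg_smul]
  rw [hval] at h
  exact h

lemma diff_ftor (hI : IsOpen I) (hg : IsUnitSpeedNondeg I g) (hu : u ∈ I) :
    DifferentiableAt ℝ (ftor g) u := by
  have hfun : ftor g = fun s =>
      (deriv (deriv (deriv g)) s ⬝ᵥ cross3 (deriv g s) (deriv (deriv g) s)) / fcurv g s ^ 2 := by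
    funext s
    rw [ftor, triple3]
  rw [hfun]
  have hnum := (hdg3 hI hg hu).dot3 ((hdg1 hI hg hu).cross3' (hdg2 hI hg hu))
  have hden := (hd_fcurv hI hg hu).pow 2
  exact (hnum.div hden (pow_ne_zero 2 (ne_of_gt (fcurv_pos hg hu)))).differentiableAt

lemma mixed_diff {θ : ℝ → ℝ → ℝ} {I J : Set ℝ} (hI : IsOpen I) (hJ : IsOpen J)
    (hθ : ContDiffOn ℝ (⊤ : ℕ∞) (fun p : ℝ × ℝ => θ p.1 p.2) (I ×ˢ J))
    {u0 v0 : ℝ} (hu0 : u0 ∈ I) (hv0 : v0 ∈ J) :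
    DifferentiableAt ℝ (fun v => pduS θ u0 v) v0 := by
  set θ2 : ℝ × ℝ → ℝ := fun p => θ p.1 p.2 with hθ2
  have hO : IsOpen (I ×ˢ J) := hI.prod hJ
  have hfd : ContDiffOn ℝ (⊤ : ℕ∞) (fderiv ℝ θ2) (I ×ˢ J) :=
    hθ.fderiv_of_isOpen hO (by norm_cast)
  have happ : ContDiffOn ℝ (⊤ : ℕ∞) (fun p => fderiv ℝ θ2 p (1, 0)) (I ×ˢ J) :=
    hfd.clm_apply contDiffOn_const
  have hcomp : DifferentiableAt ℝ (fun v => fderiv ℝ θ2 (u0, v) (1, 0)) v0 := by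
    have h1 : ContDiffAt ℝ (⊤ : ℕ∞) (fun p => fderiv ℝ θ2 p (1, 0)) (u0, v0) :=
      happ.contDiffAt (hO.mem_nhds ⟨hu0, hv0⟩)
    have h2 : ContDiffAt ℝ (⊤ : ℕ∞) (fun v : ℝ => ((u0, v) : ℝ × ℝ)) v0 :=
      ContDiffAt.prodMk contDiffAt_const contDiffAt_id
    exact (h1.comp v0 h2).differentiableAt (by norm_cast)
  have heq : (fun v => pduS θ u0 v) =ᶠ[nhds v0] (fun v => fderiv ℝ θ2 (u0, v) (1, 0)) := by
    filter_upwards [hJ.mem_nhds hv0] with v hv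
    have hdAt : DifferentiableAt ℝ θ2 (u0, v) :=
      (hθ.contDiffAt (hO.mem_nhds ⟨hu0, hv⟩)).differentiableAt (by norm_cast)
    have hline : HasDerivAt (fun u : ℝ => ((u, v) : ℝ × ℝ)) (1, 0) u0 :=
      HasDerivAt.prodMk (hasDerivAt_id u0) (hasDerivAt_const u0 v)
    have hh := hdAt.hasFDerivAt.comp_hasDerivAt u0 hline
    exact hh.deriv
  exact hcomp.congr_of_eventuallyEq heq

def t11D (g gt : ℝ → V3) (u v : ℝ) : ℝ := fnor gt v ⬝ᵥ fnor g u
def t12D (g gt : ℝ → V3) (u v : ℝ) : ℝ := fnor gt v ⬝ᵥ fbin g u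
def t21D (g gt : ℝ → V3) (u v : ℝ) : ℝ := fbin gt v ⬝ᵥ fnor g u
def t22D (g gt : ℝ → V3) (u v : ℝ) : ℝ := fbin gt v ⬝ᵥ fbin g u
def t13D (g gt : ℝ → V3) (u v : ℝ) : ℝ := fnor gt v ⬝ᵥ deriv g u
def t31D (g gt : ℝ → V3) (u v : ℝ) : ℝ := deriv gt v ⬝ᵥ fnor g u
def t32D (g gt : ℝ → V3) (u v : ℝ) : ℝ := deriv gt v ⬝ᵥ fbin g u
def t33D (g gt : ℝ → V3) (u v : ℝ) : ℝ := deriv gt v ⬝ᵥ deriv g u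

def GD (g gt : ℝ → V3) (θ : ℝ → ℝ → ℝ) (u v : ℝ) : ℝ :=
  (pduS θ u v - ftor g u) *
      (t31D g gt u v * Real.cos (θ u v) - t32D g gt u v * Real.sin (θ u v))
    - fcurv g u * t33D g gt u v * Real.sin (θ u v)

def HD (g gt : ℝ → V3) (θ : ℝ → ℝ → ℝ) (u v : ℝ) : ℝ :=
  fcurv gt v * (t12D g gt u v * Real.cos (θ u v) + t11D g gt u v * Real.sin (θ u v))
    + (t31D g gt u v * Real.cos (θ u v) - t32D g gt u v * Real.sin (θ u v)) * pdvS θ u v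

/-- relations (1)–(5) at a point with parallel tangents, for non-degenerate
arc-length parametrized curves. -/
theorem rel_theta_frenet
    (I J : Set ℝ) (hI : IsOpen I) (hIc : I.OrdConnected)
    (hJ : IsOpen J) (hJc : J.OrdConnected)
    (g gt : ℝ → V3)
    (hg : IsUnitSpeedNondeg I g) (hgt : IsUnitSpeedNondeg J gt)
    (θ : ℝ → ℝ → ℝ)
    (hθ : ContDiffOn ℝ (⊤ : ℕ∞) (fun p : ℝ × ℝ => θ p.1 p.2) (I ×ˢ J))
    (hθeq : ∀ u ∈ I, ∀ v ∈ J,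
      frameMatrix (fnor g) (fbin g) (fnor gt) (fbin gt) u v 2 1 * Real.cos (θ u v)
        + frameMatrix (fnor g) (fbin g) (fnor gt) (fbin gt) u v 2 0 * Real.sin (θ u v) = 0)
    (u0 v0 : ℝ) (hu0 : u0 ∈ I) (hv0 : v0 ∈ J)
    (htan : cross3 (deriv g u0) (deriv gt v0) = 0) :
    (Real.sin (θ u0 v0) = 0 ∧ (Real.cos (θ u0 v0) = 1 ∨ Real.cos (θ u0 v0) = -1)) ∧
    frameMatrix (fnor g) (fbin g) (fnor gt) (fbin gt) u0 v0 0 1 = 0 ∧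
    pduS θ u0 v0 = ftor g u0 / 2 ∧
    fcurv gt v0 * (ftor g u0 - pduS θ u0 v0)
        * frameMatrix (fnor g) (fbin g) (fnor gt) (fbin gt) u0 v0 0 0
      + pdvS θ u0 v0 * fcurv g u0
        * frameMatrix (fnor g) (fbin g) (fnor gt) (fbin gt) u0 v0 2 2 = 0 ∧
    ftor gt v0 * frameMatrix (fnor g) (fbin g) (fnor gt) (fbin gt) u0 v0 1 1
      + 2 * frameMatrix (fnor g) (fbin g) (fnor gt) (fbin gt) u0 v0 0 0
        * pdvS θ u0 v0 = 0 := by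
  have hO : IsOpen (I ×ˢ J) := hI.prod hJ
  -- frame matrix entries
  have hE21 : ∀ u : ℝ, ∀ v ∈ J,
      frameMatrix (fnor g) (fbin g) (fnor gt) (fbin gt) u v 2 1 = t32D g gt u v := by
    intro u v hv
    show mu3 (fnor gt) (fbin gt) v ⬝ᵥ fbin g u = _
    rw [mu3, show cross3 (fnor gt v) (fbin gt v) = deriv gt v from mu_eq hJ hgt hv]
    rfl
  have hE20 : ∀ u : ℝ, ∀ v ∈ J,
      frameMatrix (fnor g) (fbin g) (fnor gt) (fbin gt) u v 2 0 = t31D g gt u v := by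
    intro u v hv
    show mu3 (fnor gt) (fbin gt) v ⬝ᵥ fnor g u = _
    rw [mu3, show cross3 (fnor gt v) (fbin gt v) = deriv gt v from mu_eq hJ hgt hv]
    rfl
  have hE22 : frameMatrix (fnor g) (fbin g) (fnor gt) (fbin gt) u0 v0 2 2 = t33D g gt u0 v0 := by
    show mu3 (fnor gt) (fbin gt) v0 ⬝ᵥ mu3 (fnor g) (fbin g) u0 = _
    rw [mu3, mu3, show cross3 (fnor gt v0) (fbin gt v0) = deriv gt v0 from mu_eq hJ hgt hv0,
      show cross3 (fnor g u0) (fbin g u0) = deriv g u0 from mu_eq hI hg hu0]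
    rfl
  have hE01 : frameMatrix (fnor g) (fbin g) (fnor gt) (fbin gt) u0 v0 0 1 = t12D g gt u0 v0 := rfl
  have hE00 : frameMatrix (fnor g) (fbin g) (fnor gt) (fbin gt) u0 v0 0 0 = t11D g gt u0 v0 := rfl
  have hE11 : frameMatrix (fnor g) (fbin g) (fnor gt) (fbin gt) u0 v0 1 1 = t22D g gt u0 v0 := rfl
  -- the vanishing function F
  have hFz : ∀ u ∈ I, ∀ v ∈ J,
      t32D g gt u v * Real.cos (θ u v) + t31D g gt u v * Real.sin (θ u v) = 0 := by
    intro u hu v hv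
    have h := hθeq u hu v hv
    rwa [hE21 u v hv, hE20 u v hv] at h
  -- partial derivatives of θ
  have hθux : ∀ u ∈ I, ∀ v ∈ J, HasDerivAt (fun u' => θ u' v) (pduS θ u v) u := by
    intro u hu v hv
    have hcd : ContDiffAt ℝ (⊤ : ℕ∞) (fun p : ℝ × ℝ => θ p.1 p.2) (u, v) :=
      hθ.contDiffAt (hO.mem_nhds ⟨hu, hv⟩)
    have hline : ContDiffAt ℝ (⊤ : ℕ∞) (fun u' : ℝ => ((u', v) : ℝ × ℝ)) u :=
      ContDiffAt.prodMk contDiffAt_id contDiffAt_const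
    exact ((hcd.comp u hline).differentiableAt (by norm_cast)).hasDerivAt
  have hθvx : ∀ u ∈ I, ∀ v ∈ J, HasDerivAt (fun v' => θ u v') (pdvS θ u v) v := by
    intro u hu v hv
    have hcd : ContDiffAt ℝ (⊤ : ℕ∞) (fun p : ℝ × ℝ => θ p.1 p.2) (u, v) :=
      hθ.contDiffAt (hO.mem_nhds ⟨hu, hv⟩)
    have hline : ContDiffAt ℝ (⊤ : ℕ∞) (fun v' : ℝ => ((u, v') : ℝ × ℝ)) v :=
      ContDiffAt.prodMk contDiffAt_const contDiffAt_id
    exact ((hcd.comp v hline).differentiableAt (by norm_cast)).hasDerivAt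
  -- u-derivatives of frame entries
  have hd31u : ∀ u ∈ I, ∀ v : ℝ, HasDerivAt (fun u' => t31D g gt u' v)
      (-(fcurv g u) * t33D g gt u v + ftor g u * t32D g gt u v) u := by
    intro u hu v
    have h := (hasDerivAt_const u (deriv gt v)).dot3 (hd_fnor hI hg hu)
    refine (h).congr_deriv ?_
    rw [zero_dotProduct, zero_add, dotProduct_add, dotProduct_smul,
      dotProduct_smul, t33D, t32D]
    simp only [smul_eq_mul]
  have hd32u : ∀ u ∈ I, ∀ v : ℝ, HasDerivAt (fun u' => t32D g gt u' v)
      (-(ftor g u) * t31D g gt u v) u := by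
    intro u hu v
    have h := (hasDerivAt_const u (deriv gt v)).dot3 (hd_fbin hI hg hu)
    refine (h).congr_deriv ?_
    rw [zero_dotProduct, zero_add, dotProduct_smul, t31D]
    simp only [smul_eq_mul]
  have hd33u : ∀ u ∈ I, ∀ v : ℝ, HasDerivAt (fun u' => t33D g gt u' v)
      (fcurv g u * t31D g gt u v) u := by
    intro u hu v
    have h := (hasDerivAt_const u (deriv gt v)).dot3 (hdg1 hI hg hu)
    refine (h).congr_deriv ?_
    rw [zero_dotProduct, zero_add, frenet1 hg hu, dotProduct_smul, t31D]
    simp only [smul_eq_mul]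
  -- v-derivatives of frame entries
  have hd31v : ∀ u : ℝ, ∀ v ∈ J, HasDerivAt (fun v' => t31D g gt u v')
      (fcurv gt v * t11D g gt u v) v := by
    intro u v hv
    have h := (hdg1 hJ hgt hv).dot3 (hasDerivAt_const v (fnor g u))
    refine (h).congr_deriv ?_
    rw [dotProduct_zero, add_zero, frenet1 hgt hv, smul_dotProduct, t11D]
    simp only [smul_eq_mul]
  have hd32v : ∀ u : ℝ, ∀ v ∈ J, HasDerivAt (fun v' => t32D g gt u v')
      (fcurv gt v * t12D g gt u v) v := by
    intro u v hv
    have h := (hdg1 hJ hgt hv).dot3 (hasDerivAt_const v (fbin g u))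
    refine (h).congr_deriv ?_
    rw [dotProduct_zero, add_zero, frenet1 hgt hv, smul_dotProduct, t12D]
    simp only [smul_eq_mul]
  have hd33v : ∀ u : ℝ, ∀ v ∈ J, HasDerivAt (fun v' => t33D g gt u v')
      (fcurv gt v * t13D g gt u v) v := by
    intro u v hv
    have h := (hdg1 hJ hgt hv).dot3 (hasDerivAt_const v (deriv g u))
    refine (h).congr_deriv ?_
    rw [dotProduct_zero, add_zero, frenet1 hgt hv, smul_dotProduct, t13D]
    simp only [smul_eq_mul]
  have hd11v : ∀ u : ℝ, ∀ v ∈ J, HasDerivAt (fun v' => t11D g gt u v')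
      (-(fcurv gt v) * t31D g gt u v + ftor gt v * t21D g gt u v) v := by
    intro u v hv
    have h := (hd_fnor hJ hgt hv).dot3 (hasDerivAt_const v (fnor g u))
    refine (h).congr_deriv ?_
    rw [dotProduct_zero, add_zero, add_dotProduct, smul_dotProduct,
      smul_dotProduct, t31D, t21D]
    simp only [smul_eq_mul]
  have hd12v : ∀ u : ℝ, ∀ v ∈ J, HasDerivAt (fun v' => t12D g gt u v')
      (-(fcurv gt v) * t32D g gt u v + ftor gt v * t22D g gt u v) v := by
    intro u v hv
    have h := (hd_fnor hJ hgt hv).dot3 (hasDerivAt_const v (fbin g u))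
    refine (h).congr_deriv ?_
    rw [dotProduct_zero, add_zero, add_dotProduct, smul_dotProduct,
      smul_dotProduct, t32D, t22D]
    simp only [smul_eq_mul]
  -- derivative of F in u is GD, in v is HD; both vanish
  have hG0 : ∀ u ∈ I, ∀ v ∈ J, GD g gt θ u v = 0 := by
    intro u hu v hv
    have h := ((hd32u u hu v).mul ((hθux u hu v hv).cos)).add
      ((hd31u u hu v).mul ((hθux u hu v hv).sin))
    have h' : HasDerivAt (fun u' => t32D g gt u' v * Real.cos (θ u' v)
        + t31D g gt u' v * Real.sin (θ u' v)) (GD g gt θ u v) u := by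
      refine (h).congr_deriv ?_
      rw [GD]; ring
    exact constOn_deriv_zero hI hu (fun x hx => hFz x hx v hv) h'
  have hH0 : ∀ u ∈ I, ∀ v ∈ J, HD g gt θ u v = 0 := by
    intro u hu v hv
    have h := ((hd32v u v hv).mul ((hθvx u hu v hv).cos)).add
      ((hd31v u v hv).mul ((hθvx u hu v hv).sin))
    have h' : HasDerivAt (fun v' => t32D g gt u v' * Real.cos (θ u v')
        + t31D g gt u v' * Real.sin (θ u v')) (HD g gt θ u v) v := by
      refine (h).congr_deriv ?_
      rw [HD]; ring
    exact constOn_deriv_zero hJ hv (fun y hy => hFz u hu y hy) h'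
  -- facts at the special point
  obtain ⟨hssq, hbe⟩ := parallel_unit (hg.2.1 u0 hu0) (hgt.2.1 v0 hv0) htan
  set s : ℝ := deriv g u0 ⬝ᵥ deriv gt v0 with hsdef
  have h31z : t31D g gt u0 v0 = 0 := by
    rw [t31D, hbe, smul_dotProduct, t_dot_nor hI hg hu0, smul_zero]
  have h32z : t32D g gt u0 v0 = 0 := by
    rw [t32D, hbe, smul_dotProduct, t_dot_bin, smul_zero]
  have h33s : t33D g gt u0 v0 = s := by
    rw [t33D, hbe, smul_dotProduct, hg.2.1 u0 hu0, smul_eq_mul, mul_one]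
  have hsne : s ≠ 0 := by
    intro h; rw [h] at hssq; norm_num at hssq
  have hκ0 : 0 < fcurv g u0 := fcurv_pos hg hu0
  have hκt0 : 0 < fcurv gt v0 := fcurv_pos hgt hv0
  -- claim 1
  have hsin : Real.sin (θ u0 v0) = 0 := by
    have h := hG0 u0 hu0 v0 hv0
    rw [GD, h31z, h32z, h33s] at h
    have h0 : fcurv g u0 * (s * Real.sin (θ u0 v0)) = 0 := by linear_combination -h
    rcases mul_eq_zero.1 h0 with h1 | h1
    · exact absurd h1 (ne_of_gt hκ0)
    · rcases mul_eq_zero.1 h1 with h2 | h2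
      · exact absurd h2 hsne
      · exact h2
  have hcossq : Real.cos (θ u0 v0) ^ 2 = 1 := by
    nlinarith [Real.sin_sq_add_cos_sq (θ u0 v0), hsin]
  have hcosne : Real.cos (θ u0 v0) ≠ 0 := by
    intro h; rw [h] at hcossq; norm_num at hcossq
  have hcos : Real.cos (θ u0 v0) = 1 ∨ Real.cos (θ u0 v0) = -1 := by
    have h : (Real.cos (θ u0 v0) - 1) * (Real.cos (θ u0 v0) + 1) = 0 := by
      linear_combination hcossq
    rcases mul_eq_zero.1 h with h1 | h1
    · left; linarith
    · right; linarith
  -- claim 2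
  have h12z : t12D g gt u0 v0 = 0 := by
    have h := hH0 u0 hu0 v0 hv0
    rw [HD, h31z, h32z, hsin] at h
    have h0 : fcurv gt v0 * (t12D g gt u0 v0 * Real.cos (θ u0 v0)) = 0 := by
      linear_combination h
    rcases mul_eq_zero.1 h0 with h1 | h1
    · exact absurd h1 (ne_of_gt hκt0)
    · rcases mul_eq_zero.1 h1 with h2 | h2
      · exact h2
      · exact absurd h2 hcosne
  -- claim 3
  have hcdu0 : ContDiffAt ℝ (⊤ : ℕ∞) (fun u' => θ u' v0) u0 := by
    have hcd : ContDiffAt ℝ (⊤ : ℕ∞) (fun p : ℝ × ℝ => θ p.1 p.2) (u0, v0) :=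
      hθ.contDiffAt (hO.mem_nhds ⟨hu0, hv0⟩)
    exact hcd.comp u0 (ContDiffAt.prodMk contDiffAt_id contDiffAt_const)
  have hcdv0 : ContDiffAt ℝ (⊤ : ℕ∞) (fun v' => θ u0 v') v0 := by
    have hcd : ContDiffAt ℝ (⊤ : ℕ∞) (fun p : ℝ × ℝ => θ p.1 p.2) (u0, v0) :=
      hθ.contDiffAt (hO.mem_nhds ⟨hu0, hv0⟩)
    exact hcd.comp v0 (ContDiffAt.prodMk contDiffAt_const contDiffAt_id)
  have hθuu : HasDerivAt (fun x => pduS θ x v0) (deriv (fun x => pduS θ x v0) u0) u0 :=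
    (diffAt_deriv hcdu0).hasDerivAt
  have hτ' : HasDerivAt (ftor g) (deriv (ftor g) u0) u0 := (diff_ftor hI hg hu0).hasDerivAt
  have hclaim3 : pduS θ u0 v0 = ftor g u0 / 2 := by
    have hA := hθuu.sub hτ'
    have hB := ((hd31u u0 hu0 v0).mul ((hθux u0 hu0 v0 hv0).cos)).sub
      ((hd32u u0 hu0 v0).mul ((hθux u0 hu0 v0 hv0).sin))
    have hC := (((hd_fcurv hI hg hu0).mul (hd33u u0 hu0 v0)).mul ((hθux u0 hu0 v0 hv0).sin))
    have hGd : HasDerivAt (fun x => GD g gt θ x v0) _ u0 := (hA.mul hB).sub hC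
    have hVAL := constOn_deriv_zero hI hu0 (fun x hx => hG0 x hx v0 hv0) hGd
    simp only [Pi.mul_apply, Pi.sub_apply, Pi.add_apply] at hVAL
    rw [h31z, h32z, hsin, h33s] at hVAL
    have hkey : fcurv g u0 * (s * Real.cos (θ u0 v0)) *
        (2 * pduS θ u0 v0 - ftor g u0) = 0 := by
      linear_combination -hVAL
    rcases mul_eq_zero.1 hkey with h1 | h1
    · rcases mul_eq_zero.1 h1 with h2 | h2
      · exact absurd h2 (ne_of_gt hκ0)
      · rcases mul_eq_zero.1 h2 with h3 | h3
        · exact absurd h3 hsne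
        · exact absurd h3 hcosne
    · linarith
  -- claim 4
  have hθuv : HasDerivAt (fun v => pduS θ u0 v) (deriv (fun v => pduS θ u0 v) v0) v0 :=
    (mixed_diff hI hJ hθ hu0 hv0).hasDerivAt
  have hclaim4 : fcurv gt v0 * (ftor g u0 - pduS θ u0 v0) * t11D g gt u0 v0
      + pdvS θ u0 v0 * fcurv g u0 * s = 0 := by
    have hA := hθuv.sub_const (ftor g u0)
    have hB := ((hd31v u0 v0 hv0).mul ((hθvx u0 hu0 v0 hv0).cos)).sub
      ((hd32v u0 v0 hv0).mul ((hθvx u0 hu0 v0 hv0).sin))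
    have hC := (((hasDerivAt_const v0 (fcurv g u0)).mul (hd33v u0 v0 hv0)).mul
      ((hθvx u0 hu0 v0 hv0).sin))
    have hGd : HasDerivAt (fun v => GD g gt θ u0 v) _ v0 := (hA.mul hB).sub hC
    have hVAL := constOn_deriv_zero hJ hv0 (fun y hy => hG0 u0 hu0 y hy) hGd
    simp only [Pi.mul_apply, Pi.sub_apply, Pi.add_apply] at hVAL
    rw [h31z, h32z, hsin, h33s, h12z] at hVAL
    have hkey : Real.cos (θ u0 v0) *
        (fcurv gt v0 * (ftor g u0 - pduS θ u0 v0) * t11D g gt u0 v0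
          + pdvS θ u0 v0 * fcurv g u0 * s) = 0 := by
      linear_combination -hVAL
    rcases mul_eq_zero.1 hkey with h1 | h1
    · exact absurd h1 hcosne
    · exact h1
  -- claim 5
  have hθvv : HasDerivAt (fun v => pdvS θ u0 v) (deriv (fun v => pdvS θ u0 v) v0) v0 :=
    (diffAt_deriv hcdv0).hasDerivAt
  have hclaim5 : ftor gt v0 * t22D g gt u0 v0
      + 2 * t11D g gt u0 v0 * pdvS θ u0 v0 = 0 := by
    have hP := (hd_fcurv hJ hgt hv0).mul
      (((hd12v u0 v0 hv0).mul ((hθvx u0 hu0 v0 hv0).cos)).add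
        ((hd11v u0 v0 hv0).mul ((hθvx u0 hu0 v0 hv0).sin)))
    have hQ := (((hd31v u0 v0 hv0).mul ((hθvx u0 hu0 v0 hv0).cos)).sub
      ((hd32v u0 v0 hv0).mul ((hθvx u0 hu0 v0 hv0).sin))).mul hθvv
    have hHd : HasDerivAt (fun v => HD g gt θ u0 v) _ v0 := hP.add hQ
    have hVAL := constOn_deriv_zero hJ hv0 (fun y hy => hH0 u0 hu0 y hy) hHd
    simp only [Pi.mul_apply, Pi.sub_apply, Pi.add_apply] at hVAL
    rw [h31z, h32z, hsin, h12z] at hVAL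
    have hkey : fcurv gt v0 * Real.cos (θ u0 v0) *
        (ftor gt v0 * t22D g gt u0 v0 + 2 * t11D g gt u0 v0 * pdvS θ u0 v0) = 0 := by
      linear_combination hVAL
    rcases mul_eq_zero.1 hkey with h1 | h1
    · rcases mul_eq_zero.1 h1 with h2 | h2
      · exact absurd h2 (ne_of_gt hκt0)
      · exact absurd h2 hcosne
    · exact h1
  refine ⟨⟨hsin, hcos⟩, ?_, hclaim3, ?_, ?_⟩
  · rw [hE01]; exact h12z
  · rw [hE00, hE22, h33s]; exact hclaim4
  · rw [hE11, hE00]; exact hclaim5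

end
end

section
/- Let (γ, ν₁, ν₂) and (γ̃, ν̃₁, ν̃₂) be framed curves with curvatures (ℓ, m, n, α) and (ℓ̃, m̃, ñ, α̃), frame matrix T = (t_ij), and translation surface x(u,v) = γ(u) + γ̃(v); suppose θ : I × J → ℝ is smooth with t₃₂ cos θ + t₃₁ sin θ = 0 on I × J. Let p₀ = (u₀, v₀) satisfy α(u₀) = 0, α̃(v₀) = 0 and μ(u₀) × μ̃(v₀) = 0. Then p₀ is never a D₄⁺ singular point and never a D₄⁻ singular point of x. -/
open Matrix Real

noncomputable section

open Filter Set Asymptotics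

/-! ### Auxiliary lemmas -/

lemma coe_top_le' : (1 : WithTop ℕ∞) ≤ ((⊤ : ℕ∞) : WithTop ℕ∞) := by exact_mod_cast le_top
lemma coe_top_add_one' : ((⊤ : ℕ∞) : WithTop ℕ∞) + 1 ≤ ((⊤ : ℕ∞) : WithTop ℕ∞) := by norm_num

lemma dot_lagrange' (w a b : V3) :
    (w ⬝ᵥ w) * ((a ⬝ᵥ a) * (b ⬝ᵥ b) - (a ⬝ᵥ b)^2) =
      (w ⬝ᵥ cross3 a b)^2 + ((w ⬝ᵥ b)^2 * (a ⬝ᵥ a)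
        - 2*(w ⬝ᵥ a)*(w ⬝ᵥ b)*(a ⬝ᵥ b) + (w ⬝ᵥ a)^2 * (b ⬝ᵥ b)) := by
  simp [cross3, cross_apply, dotProduct, Fin.sum_univ_three]
  ring

lemma dot_self_eq_zero' {w : V3} (h : w ⬝ᵥ w = 0) : w = 0 := by
  have h' : w 0 ^2 + w 1 ^2 + w 2 ^2 = 0 := by
    simpa [dotProduct, Fin.sum_univ_three, sq] using h
  funext i
  fin_cases i <;>
    simp <;> nlinarith [sq_nonneg (w 0), sq_nonneg (w 1), sq_nonneg (w 2)]

lemma orth3_eq_zero' {a b w : V3} (ha : a ⬝ᵥ a = 1) (hb : b ⬝ᵥ b = 1) (hab : a ⬝ᵥ b = 0)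
    (hwa : w ⬝ᵥ a = 0) (hwb : w ⬝ᵥ b = 0) (hwm : w ⬝ᵥ cross3 a b = 0) : w = 0 := by
  apply dot_self_eq_zero'
  have := dot_lagrange' w a b
  rw [ha, hb, hab, hwa, hwb, hwm] at this
  linarith [this]

lemma cross3_dot_self_unit {a b : V3} (ha : a ⬝ᵥ a = 1) (hb : b ⬝ᵥ b = 1) (hab : a ⬝ᵥ b = 0) :
    cross3 a b ⬝ᵥ cross3 a b = 1 := by
  have : cross3 a b ⬝ᵥ cross3 a b = (a ⬝ᵥ a) * (b ⬝ᵥ b) - (a ⬝ᵥ b)^2 := by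
    simp [cross3, cross_apply, dotProduct, Fin.sum_univ_three]; ring
  rw [this, ha, hb, hab]; ring

lemma orth2_span' {a b : V3} (w : V3) (ha : a ⬝ᵥ a = 1) (hb : b ⬝ᵥ b = 1) (hab : a ⬝ᵥ b = 0)
    (hwa : w ⬝ᵥ a = 0) (hwb : w ⬝ᵥ b = 0) :
    w = (w ⬝ᵥ cross3 a b) • cross3 a b := by
  have hmm : cross3 a b ⬝ᵥ cross3 a b = 1 := cross3_dot_self_unit ha hb hab
  have hma : cross3 a b ⬝ᵥ a = 0 := by
    simp [cross3, cross_apply, dotProduct, Fin.sum_univ_three]; ring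
  have hmb : cross3 a b ⬝ᵥ b = 0 := by
    simp [cross3, cross_apply, dotProduct, Fin.sum_univ_three]; ring
  have h0 : w - (w ⬝ᵥ cross3 a b) • cross3 a b = 0 := by
    apply orth3_eq_zero' ha hb hab
    · rw [sub_dotProduct, smul_dotProduct, hma]; simpa using hwa
    · rw [sub_dotProduct, smul_dotProduct, hmb]; simpa using hwb
    · rw [sub_dotProduct, smul_dotProduct, hmm, smul_eq_mul]; ring
  linear_combination (norm := module) h0

lemma parallel_of_cross_zero' {m m' : V3} (hm : m ⬝ᵥ m = 1) (h : cross3 m m' = 0) :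
    m' = (m' ⬝ᵥ m) • m := by
  have hL : (m ⬝ᵥ m) * (m' ⬝ᵥ m') - (m ⬝ᵥ m')^2 = cross3 m m' ⬝ᵥ cross3 m m' := by
    simp [cross3, cross_apply, dotProduct, Fin.sum_univ_three]; ring
  rw [h] at hL
  simp [hm] at hL
  have h0 : (m' - (m' ⬝ᵥ m) • m) ⬝ᵥ (m' - (m' ⬝ᵥ m) • m) = 0 := by
    rw [sub_dotProduct, smul_dotProduct, dotProduct_sub, dotProduct_sub,
      dotProduct_smul, dotProduct_smul, hm, dotProduct_comm m' m]
    simp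
    nlinarith [hL]
  have := dot_self_eq_zero' h0
  linear_combination (norm := module) this

/-! ### One-variable second-order limit -/

lemma quad_limit' (γ : ℝ → ℝ) (I : Set ℝ) (hI : IsOpen I) (u0 : ℝ) (hu : u0 ∈ I)
    (hγ : ContDiffOn ℝ (⊤ : ℕ∞) γ I) (h0 : deriv γ u0 = 0) (a : ℝ) :
    Tendsto (fun t => (γ (u0 + a*t) - γ u0) / t^2) (nhdsWithin (0:ℝ) {0}ᶜ)
      (nhds (a^2 * deriv (deriv γ) u0 / 2)) := by
  have hdiff : ∀ u ∈ I, HasDerivAt γ (deriv γ u) u := fun u hu' =>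
    ((hγ.contDiffAt (hI.mem_nhds hu')).differentiableAt (by simp)).hasDerivAt
  have hdd : ContDiffOn ℝ (⊤ : ℕ∞) (deriv γ) I := hγ.deriv_of_isOpen hI coe_top_add_one'
  have hdd1 : HasDerivAt (deriv γ) (deriv (deriv γ) u0) u0 :=
    ((hdd.contDiffAt (hI.mem_nhds hu)).differentiableAt (by simp)).hasDerivAt
  have hline : ∀ t : ℝ, HasDerivAt (fun t : ℝ => u0 + a*t) a t := by
    intro t
    simpa using ((hasDerivAt_id t).const_mul a).const_add u0
  have hev : ∀ᶠ t in nhds (0:ℝ), u0 + a*t ∈ I := by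
    have hc : Tendsto (fun t : ℝ => u0 + a*t) (nhds 0) (nhds u0) := by
      have : ContinuousAt (fun t : ℝ => u0 + a*t) 0 := by fun_prop
      simpa using this.tendsto
    exact hc.eventually (hI.eventually_mem hu)
  have hdd1' : HasDerivAt (deriv γ) (deriv (deriv γ) u0) (u0 + a*0) := by
    simpa using hdd1
  have hpsi : HasDerivAt (fun t => deriv γ (u0 + a*t)) (deriv (deriv γ) u0 * a) 0 :=
    HasDerivAt.comp (h₂ := deriv γ) (h := fun t : ℝ => u0 + a*t) 0 hdd1' (hline 0)
  have hslope : Tendsto (fun t => deriv γ (u0 + a*t) / t) (nhdsWithin (0:ℝ) {0}ᶜ)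
      (nhds (deriv (deriv γ) u0 * a)) := by
    have h := hasDerivAt_iff_tendsto_slope.mp hpsi
    refine h.congr (fun t => ?_)
    simp [slope_def_field, h0]
  have hdiv : Tendsto (fun t => (deriv γ (u0 + a*t) * a) / (2*t)) (nhdsWithin (0:ℝ) {0}ᶜ)
      (nhds (a^2 * deriv (deriv γ) u0 / 2)) := by
    have h2 := hslope.const_mul (a/2)
    have heq : (fun t => a/2 * (deriv γ (u0 + a*t) / t))
        = fun t => (deriv γ (u0 + a*t) * a) / (2*t) := by
      funext t
      simp [div_eq_mul_inv, mul_inv]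
      ring
    rw [heq] at h2
    convert h2 using 2
    ring
  have hff' : ∀ᶠ t in nhdsWithin (0:ℝ) {0}ᶜ,
      HasDerivAt (fun t => γ (u0 + a*t) - γ u0) (deriv γ (u0 + a*t) * a) t := by
    filter_upwards [nhdsWithin_le_nhds hev] with t ht
    have h1 : HasDerivAt (fun t => γ (u0 + a*t)) (deriv γ (u0 + a*t) * a) t :=
      (hdiff _ ht).comp t (hline t)
    simpa using h1.sub_const (γ u0)
  have hgg' : ∀ᶠ t in nhdsWithin (0:ℝ) {0}ᶜ, HasDerivAt (fun t : ℝ => t^2) (2*t) t := by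
    filter_upwards with t
    simpa [mul_comm] using hasDerivAt_pow 2 t
  have hg' : ∀ᶠ t in nhdsWithin (0:ℝ) {0}ᶜ, 2*t ≠ 0 := by
    filter_upwards [self_mem_nhdsWithin] with t ht
    simp only [mem_compl_iff, mem_singleton_iff] at ht
    exact mul_ne_zero two_ne_zero ht
  have hfa : Tendsto (fun t => γ (u0 + a*t) - γ u0) (nhdsWithin (0:ℝ) {0}ᶜ) (nhds 0) := by
    have hcγ : ContinuousAt γ u0 := (hdiff u0 hu).continuousAt
    have hc : Tendsto (fun t : ℝ => u0 + a*t) (nhds 0) (nhds u0) := by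
      have : ContinuousAt (fun t : ℝ => u0 + a*t) 0 := by fun_prop
      simpa using this.tendsto
    have := (hcγ.tendsto.comp hc).sub_const (γ u0)
    simpa using this.mono_left nhdsWithin_le_nhds
  have hga : Tendsto (fun t : ℝ => t^2) (nhdsWithin (0:ℝ) {0}ᶜ) (nhds 0) := by
    have : Tendsto (fun t : ℝ => t^2) (nhds 0) (nhds 0) := by
      simpa using (continuous_pow 2 (M := ℝ)).tendsto 0
    exact this.mono_left nhdsWithin_le_nhds
  exact HasDerivAt.lhopital_zero_nhdsNE hff' hgg' hg' hfa hga hdiv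

/-! ### Vector-valued helpers -/

lemma hasDerivAt_of_mem' {g : ℝ → V3} {I : Set ℝ} (hI : IsOpen I)
    (hg : ContDiffOn ℝ (⊤ : ℕ∞) g I) (u : ℝ) (hu : u ∈ I) : HasDerivAt g (deriv g u) u :=
  ((hg.contDiffAt (hI.mem_nhds hu)).differentiableAt (by simp)).hasDerivAt

lemma deriv_contDiffOn' {g : ℝ → V3} {I : Set ℝ} (hI : IsOpen I)
    (hg : ContDiffOn ℝ (⊤ : ℕ∞) g I) : ContDiffOn ℝ (⊤ : ℕ∞) (deriv g) I :=
  hg.deriv_of_isOpen hI coe_top_add_one'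

lemma comp_contDiffOn' {g : ℝ → V3} {I : Set ℝ}
    (hg : ContDiffOn ℝ (⊤ : ℕ∞) g I) (i : Fin 3) : ContDiffOn ℝ (⊤ : ℕ∞) (fun u => g u i) I :=
  (ContinuousLinearMap.contDiff
    (ContinuousLinearMap.proj (R := ℝ) (φ := fun _ : Fin 3 => ℝ) i)).comp_contDiffOn hg

lemma comp_deriv_eq' {g : ℝ → V3} {I : Set ℝ} (hI : IsOpen I)
    (hg : ContDiffOn ℝ (⊤ : ℕ∞) g I) (i : Fin 3) (u : ℝ) (hu : u ∈ I) :
    deriv (fun u => g u i) u = deriv g u i :=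
  (hasDerivAt_pi.mp (hasDerivAt_of_mem' hI hg u hu) i).deriv

lemma comp_deriv2_eq' {g : ℝ → V3} {I : Set ℝ} (hI : IsOpen I)
    (hg : ContDiffOn ℝ (⊤ : ℕ∞) g I) (i : Fin 3) (u0 : ℝ) (hu : u0 ∈ I) :
    deriv (deriv (fun u => g u i)) u0 = deriv (deriv g) u0 i := by
  have hev : deriv (fun u => g u i) =ᶠ[nhds u0] (fun u => deriv g u i) := by
    filter_upwards [hI.eventually_mem hu] with u hu'
    exact comp_deriv_eq' hI hg i u hu'
  rw [hev.deriv_eq]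
  exact (hasDerivAt_pi.mp (hasDerivAt_of_mem' hI (deriv_contDiffOn' hI hg) u0 hu) i).deriv

lemma vec_quad_limit' {g : ℝ → V3} {I : Set ℝ} (hI : IsOpen I)
    (hg : ContDiffOn ℝ (⊤ : ℕ∞) g I) (u0 : ℝ) (hu : u0 ∈ I) (h0 : deriv g u0 = 0) (a : ℝ) :
    Tendsto (fun t => (t^2)⁻¹ • (g (u0 + a*t) - g u0)) (nhdsWithin (0:ℝ) {0}ᶜ)
      (nhds ((a^2/2) • deriv (deriv g) u0)) := by
  rw [tendsto_pi_nhds]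
  intro i
  have h1 := quad_limit' (fun u => g u i) I hI u0 hu (comp_contDiffOn' hg i)
    (by rw [comp_deriv_eq' hI hg i u0 hu, h0]; rfl) a
  rw [comp_deriv2_eq' hI hg i u0 hu] at h1
  have h2 : (a^2 * deriv (deriv g) u0 i / 2) = ((a^2/2) • deriv (deriv g) u0) i := by
    simp [Pi.smul_apply]; ring
  rw [h2] at h1
  refine h1.congr (fun t => ?_)
  simp [Pi.smul_apply, Pi.sub_apply, div_eq_inv_mul]

lemma hasDerivAt_dot' {A B : ℝ → V3} {A' B' : V3} {u : ℝ}
    (hA : HasDerivAt A A' u) (hB : HasDerivAt B B' u) :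
    HasDerivAt (fun u => A u ⬝ᵥ B u) (A' ⬝ᵥ B u + A u ⬝ᵥ B') u := by
  have h : ∀ i ∈ Finset.univ, HasDerivAt (fun u => A u i * B u i)
      (A' i * B u i + A u i * B' i) u := fun i _ =>
    (hasDerivAt_pi.mp hA i).mul (hasDerivAt_pi.mp hB i)
  have := HasDerivAt.fun_sum h
  simpa [dotProduct, Finset.sum_add_distrib] using this

/-! ### Framed curve consequences -/

lemma framed_data (I : Set ℝ) (hI : IsOpen I) (g nu1 nu2 : ℝ → V3)
    (hg : IsFramedCurve I g nu1 nu2) (u0 : ℝ) (hu : u0 ∈ I) (ha : curvA g nu1 nu2 u0 = 0) :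
    deriv g u0 = 0 ∧ ∃ κ : ℝ, deriv (deriv g) u0 = κ • mu3 nu1 nu2 u0 := by
  obtain ⟨hgc, hn1c, hn2c, hcond⟩ := hg
  obtain ⟨h11, h22, h12, hg1, hg2⟩ := hcond u0 hu
  have ham : deriv g u0 ⬝ᵥ cross3 (nu1 u0) (nu2 u0) = 0 := ha
  have h0 : deriv g u0 = 0 := orth3_eq_zero' h11 h22 h12 hg1 hg2 ham
  refine ⟨h0, ?_⟩
  have hDg : HasDerivAt (deriv g) (deriv (deriv g) u0) u0 :=
    hasDerivAt_of_mem' hI (deriv_contDiffOn' hI hgc) u0 hu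
  have key : ∀ (ν : ℝ → V3), ContDiffOn ℝ (⊤:ℕ∞) ν I → (∀ u ∈ I, deriv g u ⬝ᵥ ν u = 0) →
      deriv (deriv g) u0 ⬝ᵥ ν u0 = 0 := by
    intro ν hνc hν
    have hN : HasDerivAt ν (deriv ν u0) u0 := hasDerivAt_of_mem' hI hνc u0 hu
    have hdot := hasDerivAt_dot' hDg hN
    have hzero : (fun _ : ℝ => (0:ℝ)) =ᶠ[nhds u0] (fun u => deriv g u ⬝ᵥ ν u) := by
      filter_upwards [hI.eventually_mem hu] with u hu'
      exact (hν u hu').symm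
    have hconst := hdot.congr_of_eventuallyEq hzero
    have huniq := hconst.unique (hasDerivAt_const u0 0)
    rw [h0] at huniq
    simpa using huniq
  have e1 := key nu1 hn1c (fun u hu' => (hcond u hu').2.2.2.1)
  have e2 := key nu2 hn2c (fun u hu' => (hcond u hu').2.2.2.2)
  exact ⟨_, orth2_span' _ h11 h22 h12 e1 e2⟩

/-! ### Limit through the diffeomorphism `Ψ` -/

lemma psi_limit (Ψ : V3 → V3) (W : Set V3) (hW : IsOpen W) (y₀ : V3) (hy : y₀ ∈ W)
    (hΨ : ContDiffOn ℝ (⊤ : ℕ∞) Ψ W) (r : ℝ → V3) (s : V3)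
    (hq : Tendsto (fun t => (t^2)⁻¹ • r t) (nhdsWithin (0:ℝ) {0}ᶜ) (nhds s)) :
    Tendsto (fun t => (t^2)⁻¹ • (Ψ (y₀ + r t) - Ψ y₀)) (nhdsWithin (0:ℝ) {0}ᶜ)
      (nhds (fderiv ℝ Ψ y₀ s)) := by
  set l := nhdsWithin (0:ℝ) {0}ᶜ
  set L := fderiv ℝ Ψ y₀ with hL
  have hd : HasFDerivAt Ψ L y₀ :=
    ((hΨ.contDiffAt (hW.mem_nhds hy)).differentiableAt (by simp)).hasFDerivAt
  have hlo : (fun h => Ψ (y₀ + h) - Ψ y₀ - L h) =o[nhds 0] (fun h => h) :=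
    hasFDerivAt_iff_isLittleO_nhds_zero.mp hd
  have hrev : r =ᶠ[l] (fun t => (t^2) • ((t^2)⁻¹ • r t)) := by
    filter_upwards [self_mem_nhdsWithin] with t ht
    simp only [mem_compl_iff, mem_singleton_iff] at ht
    rw [smul_smul, mul_inv_cancel₀ (pow_ne_zero 2 ht), one_smul]
  have hr0 : Tendsto r l (nhds 0) := by
    have h2 : Tendsto (fun t : ℝ => t^2) l (nhds 0) := by
      have : Tendsto (fun t : ℝ => t^2) (nhds 0) (nhds 0) := by
        simpa using (continuous_pow 2 (M := ℝ)).tendsto 0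
      exact this.mono_left nhdsWithin_le_nhds
    have := h2.smul hq
    rw [zero_smul] at this
    exact this.congr' hrev.symm
  have hcomp : (fun t => Ψ (y₀ + r t) - Ψ y₀ - L (r t)) =o[l] (fun t => r t) :=
    hlo.comp_tendsto hr0
  have hqO : (fun t => (t^2)⁻¹ • r t) =O[l] (fun _ => (1:ℝ)) := hq.isBigO_one ℝ
  have hrO : r =O[l] (fun t : ℝ => t^2) := by
    have h1 : (fun t : ℝ => (t^2) • ((t^2)⁻¹ • r t)) =O[l] (fun t : ℝ => (t^2) • (1:ℝ)) :=
      (isBigO_refl (fun t : ℝ => t^2) l).smul hqO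
    have h2 : (fun t : ℝ => (t^2) • (1:ℝ)) = fun t : ℝ => t^2 := by
      funext t; simp
    rw [h2] at h1
    exact hrev.trans_isBigO h1
  have hlo2 : (fun t => Ψ (y₀ + r t) - Ψ y₀ - L (r t)) =o[l] (fun t : ℝ => t^2) :=
    hcomp.trans_isBigO hrO
  have h1 : Tendsto (fun t => (t^2)⁻¹ • (Ψ (y₀ + r t) - Ψ y₀ - L (r t))) l (nhds 0) :=
    hlo2.tendsto_inv_smul_nhds_zero
  have h2 : Tendsto (fun t => L ((t^2)⁻¹ • r t)) l (nhds (L s)) :=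
    (L.continuous.tendsto s).comp hq
  have h3 := h1.add h2
  rw [zero_add] at h3
  refine h3.congr (fun t => ?_)
  simp only [_root_.map_smul, smul_sub]
  abel

/-! ### Limit of the model map -/

lemma model_limit (ε δ : ℝ) (η : ℝ → ℝ × ℝ) (b : ℝ × ℝ)
    (hη : Tendsto (fun t => t⁻¹ • η t) (nhdsWithin (0:ℝ) {0}ᶜ) (nhds b)) :
    Tendsto (fun t => (t^2)⁻¹ •
        (![ (η t).1*(η t).2, (η t).1^2 + ε*(η t).2^2, (η t).1^2*(η t).2 + δ*(η t).2^3 ] : V3))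
      (nhdsWithin (0:ℝ) {0}ᶜ) (nhds ![b.1*b.2, b.1^2+ε*b.2^2, 0]) := by
  set l := nhdsWithin (0:ℝ) {0}ᶜ
  have hne : ∀ᶠ t : ℝ in l, t ≠ 0 := by
    filter_upwards [self_mem_nhdsWithin] with t ht
    simpa using ht
  have h1 : Tendsto (fun t => (η t).1 / t) l (nhds b.1) := by
    have := (continuous_fst.tendsto b).comp hη
    refine this.congr (fun t => ?_)
    simp [Prod.smul_fst, inv_mul_eq_div, Function.comp]
  have h2 : Tendsto (fun t => (η t).2 / t) l (nhds b.2) := by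
    have := (continuous_snd.tendsto b).comp hη
    refine this.congr (fun t => ?_)
    simp [Prod.smul_snd, inv_mul_eq_div, Function.comp]
  have ht0 : Tendsto (fun t : ℝ => t) l (nhds 0) :=
    tendsto_id.mono_left nhdsWithin_le_nhds
  rw [tendsto_pi_nhds]
  intro i
  fin_cases i
  · have h := h1.mul h2
    refine Tendsto.congr' ?_ (by simpa using h)
    filter_upwards [hne] with t ht
    simp only [Pi.smul_apply, Fin.zero_eta, Matrix.cons_val_zero, smul_eq_mul]
    field_simp [pow_two]
    try ring
  · have h := (h1.mul h1).add ((h2.mul h2).const_mul ε)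
    have h' : Tendsto (fun t => (η t).1/t*((η t).1/t) + ε*((η t).2/t*((η t).2/t))) l
        (nhds (b.1^2 + ε*b.2^2)) := by
      convert h using 2 <;> ring
    refine Tendsto.congr' ?_ (by simpa using h')
    filter_upwards [hne] with t ht
    simp only [Pi.smul_apply, smul_eq_mul]
    norm_num
    field_simp [pow_two]
    try ring
  · have h := ht0.mul ((h1.mul h1 |>.mul h2).add ((h2.mul h2 |>.mul h2).const_mul δ))
    rw [zero_mul] at h
    refine Tendsto.congr' ?_ (by simpa using h)
    filter_upwards [hne] with t ht
    simp only [Pi.smul_apply, smul_eq_mul]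
    norm_num
    field_simp [pow_two]
    try ring

/-! ### Master lemma -/

lemma no_D4_aux (I J : Set ℝ) (hI : IsOpen I) (hJ : IsOpen J)
    (g nu1 nu2 gt w1 w2 : ℝ → V3)
    (hg : IsFramedCurve I g nu1 nu2) (hgt : IsFramedCurve J gt w1 w2)
    (u0 v0 : ℝ) (hu0 : u0 ∈ I) (hv0 : v0 ∈ J)
    (ha : curvA g nu1 nu2 u0 = 0) (hat : curvA gt w1 w2 v0 = 0)
    (hdep : cross3 (mu3 nu1 nu2 u0) (mu3 w1 w2 v0) = 0)
    (ε δ : ℝ)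
    (hAE : AEquivAt (fun p => g p.1 + gt p.2) (u0, v0)
      (fun p => (![p.1*p.2, p.1^2 + ε*p.2^2, p.1^2*p.2 + δ*p.2^3] : V3))) : False := by
  classical
  set l := nhdsWithin (0:ℝ) {0}ᶜ with hldef
  have hgc := hg.1
  have hgcond := hg.2.2.2
  have hgtc := hgt.1
  obtain ⟨hg0, κg, hκg⟩ := framed_data I hI g nu1 nu2 hg u0 hu0 ha
  obtain ⟨hgt0, κt, hκt⟩ := framed_data J hJ gt w1 w2 hgt v0 hv0 hat
  obtain ⟨h11, h22, h12, -, -⟩ := hgcond u0 hu0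
  have hm0 : mu3 nu1 nu2 u0 ⬝ᵥ mu3 nu1 nu2 u0 = 1 := cross3_dot_self_unit h11 h22 h12
  have hpar : mu3 w1 w2 v0 = (mu3 w1 w2 v0 ⬝ᵥ mu3 nu1 nu2 u0) • mu3 nu1 nu2 u0 :=
    parallel_of_cross_zero' hm0 hdep
  set m₀ : V3 := mu3 nu1 nu2 u0 with hm₀def
  set d : ℝ := mu3 w1 w2 v0 ⬝ᵥ m₀ with hddef
  -- the "second order" vector associated to a direction
  set sval : ℝ × ℝ → V3 := fun a =>
    (a.1^2/2) • deriv (deriv g) u0 + (a.2^2/2) • deriv (deriv gt) v0 with hsval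
  have hsspan : ∀ a : ℝ × ℝ, ∃ κ : ℝ, sval a = κ • m₀ := by
    intro a
    refine ⟨a.1^2/2 * κg + a.2^2/2 * (κt * d), ?_⟩
    simp only [hsval]
    rw [hκg, hκt, hpar]
    module
  obtain ⟨U, W, φ, φi, Ψ, Ψi, hUo, hpU, hWo, hfpW, hfW, hφUo, hΨWo, hφ, hφi, hφiφ, hφφi,
    hΨ, hΨi, hΨiΨ, hΨΨi, hφp, hΨfp, hcomm⟩ := hAE
  set p₀ : ℝ × ℝ := (u0, v0) with hp₀def
  set y₀ : V3 := g u0 + gt v0 with hy₀def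
  have hfpW' : y₀ ∈ W := hfpW
  set L : V3 →L[ℝ] V3 := fderiv ℝ Ψ y₀ with hLdef
  set Lφ : ℝ × ℝ →L[ℝ] ℝ × ℝ := fderiv ℝ φ p₀ with hLφdef
  have hLφd : HasFDerivAt φ Lφ p₀ :=
    ((hφ.contDiffAt (hUo.mem_nhds hpU)).differentiableAt (by simp)).hasFDerivAt
  have h0mem : (0 : ℝ × ℝ) ∈ φ '' U := ⟨p₀, hpU, hφp⟩
  set Lφi : ℝ × ℝ →L[ℝ] ℝ × ℝ := fderiv ℝ φi 0 with hLφidef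
  have hLφid : HasFDerivAt φi Lφi 0 :=
    ((hφi.contDiffAt (hφUo.mem_nhds h0mem)).differentiableAt (by simp)).hasFDerivAt
  have hφi0 : φi 0 = p₀ := by rw [← hφp]; exact hφiφ _ hpU
  have hRight : ∀ w : ℝ × ℝ, Lφ (Lφi w) = w := by
    have hLφd' : HasFDerivAt φ Lφ (φi 0) := by rw [hφi0]; exact hLφd
    have hcomp : HasFDerivAt (φ ∘ φi) (Lφ.comp Lφi) 0 := hLφd'.comp 0 hLφid
    have hid : (id : ℝ × ℝ → ℝ × ℝ) =ᶠ[nhds 0] (φ ∘ φi) := by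
      filter_upwards [hφUo.mem_nhds h0mem] with q hq
      exact (hφφi q hq).symm
    have hcomp' : HasFDerivAt (id : ℝ × ℝ → ℝ × ℝ) (Lφ.comp Lφi) 0 :=
      hcomp.congr_of_eventuallyEq hid
    have := hcomp'.unique (hasFDerivAt_id 0)
    intro w
    calc Lφ (Lφi w) = (Lφ.comp Lφi) w := rfl
      _ = (ContinuousLinearMap.id ℝ (ℝ × ℝ)) w := by rw [this]
      _ = w := rfl
  -- main per-direction computation
  have claim : ∀ a : ℝ × ℝ, ∃ κ : ℝ,
      κ • (L m₀) = ![(Lφ a).1*(Lφ a).2, (Lφ a).1^2+ε*(Lφ a).2^2, 0] := by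
    intro a
    set c : ℝ → ℝ × ℝ := fun t => (u0 + a.1*t, v0 + a.2*t) with hcdef
    have hc0 : c 0 = p₀ := by simp [hcdef, hp₀def]
    have hcd : HasDerivAt c a 0 := by
      have h1 : HasDerivAt (fun t : ℝ => u0 + a.1*t) a.1 0 := by
        simpa using ((hasDerivAt_id (0:ℝ)).const_mul a.1).const_add u0
      have h2 : HasDerivAt (fun t : ℝ => v0 + a.2*t) a.2 0 := by
        simpa using ((hasDerivAt_id (0:ℝ)).const_mul a.2).const_add v0
      simpa using h1.prodMk h2
    have hcU : ∀ᶠ t in l, c t ∈ U := by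
      have := hcd.continuousAt.tendsto
      rw [hc0] at this
      exact nhdsWithin_le_nhds (this.eventually (hUo.eventually_mem hpU))
    -- f-side limit
    have A1 := vec_quad_limit' hI hgc u0 hu0 hg0 a.1
    have A2 := vec_quad_limit' hJ hgtc v0 hv0 hgt0 a.2
    have T1 : Tendsto (fun t => (t^2)⁻¹ • ((g (c t).1 + gt (c t).2) - y₀)) l
        (nhds (sval a)) := by
      have := A1.add A2
      refine this.congr (fun t => ?_)
      rw [← smul_add]
      congr 1
      simp only [hcdef, hy₀def]
      abel
    have T2 : Tendsto (fun t => (t^2)⁻¹ • (Ψ (g (c t).1 + gt (c t).2) - Ψ y₀)) l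
        (nhds (L (sval a))) := by
      have := psi_limit Ψ W hWo y₀ hfpW' hΨ
        (fun t => (g (c t).1 + gt (c t).2) - y₀) (sval a) T1
      refine this.congr (fun t => ?_)
      rw [add_sub_cancel]
    -- model side
    set η : ℝ → ℝ × ℝ := fun t => φ (c t) with hηdef
    have hη0 : η 0 = 0 := by rw [hηdef]; simp only [hc0]; exact hφp
    have hηd : HasDerivAt η (Lφ a) 0 := by
      have hLφd'' : HasFDerivAt φ Lφ (c 0) := by rw [hc0]; exact hLφd
      exact hLφd''.comp_hasDerivAt 0 hcd
    have hslope : Tendsto (fun t => t⁻¹ • η t) l (nhds (Lφ a)) := by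
      have h := hasDerivAt_iff_tendsto_slope.mp hηd
      refine h.congr (fun t => ?_)
      simp [slope, hη0]
    have T3 := model_limit ε δ η (Lφ a) hslope
    have hEq : (fun t => (t^2)⁻¹ • (Ψ (g (c t).1 + gt (c t).2) - Ψ y₀)) =ᶠ[l]
        (fun t => (t^2)⁻¹ •
          (![ (η t).1*(η t).2, (η t).1^2 + ε*(η t).2^2, (η t).1^2*(η t).2 + δ*(η t).2^3 ] : V3)) := by
      filter_upwards [hcU] with t ht
      have h1 : Ψ (g (c t).1 + gt (c t).2) = ![ (η t).1*(η t).2, (η t).1^2 + ε*(η t).2^2,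
          (η t).1^2*(η t).2 + δ*(η t).2^3 ] := hcomm (c t) ht
      have h2 : Ψ y₀ = 0 := by
        have := hΨfp
        simp only [hp₀def] at this
        rw [hy₀def]
        rw [this]
        funext i
        fin_cases i <;> norm_num
      rw [h1, h2, sub_zero]
    have hfin : L (sval a) = ![(Lφ a).1*(Lφ a).2, (Lφ a).1^2+ε*(Lφ a).2^2, 0] :=
      tendsto_nhds_unique_of_eventuallyEq T2 T3 hEq
    obtain ⟨κ, hκ⟩ := hsspan a
    refine ⟨κ, ?_⟩
    rw [← hfin, hκ, _root_.map_smul]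
  -- derive the contradiction
  obtain ⟨κ₁, h1⟩ := claim (Lφi (1, 0))
  rw [hRight (1, 0)] at h1
  obtain ⟨κ₂, h2⟩ := claim (Lφi (1, 1))
  rw [hRight (1, 1)] at h2
  have e10 : κ₁ * (L m₀) 0 = 0 := by
    have := congrFun h1 0
    simpa using this
  have e11 : κ₁ * (L m₀) 1 = 1 := by
    have := congrFun h1 1
    simpa using this
  have e20 : κ₂ * (L m₀) 0 = 1 := by
    have := congrFun h2 0
    simpa using this
  have hk1 : κ₁ = 0 := by linear_combination κ₂ * e10 - κ₁ * e20
  rw [hk1, zero_mul] at e11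
  exact zero_ne_one e11

/-- under the linearly dependent condition with `α(u₀) = α̃(v₀) = 0`,
the translation surface never has a `D₄⁺` or `D₄⁻` singular point at `p₀`. -/
theorem translationSurface_no_D4
    (I J : Set ℝ) (hI : IsOpen I) (hIc : I.OrdConnected)
    (hJ : IsOpen J) (hJc : J.OrdConnected)
    (g nu1 nu2 gt w1 w2 : ℝ → V3)
    (hg : IsFramedCurve I g nu1 nu2) (hgt : IsFramedCurve J gt w1 w2)
    (θ : ℝ → ℝ → ℝ)
    (hθ : ContDiffOn ℝ (⊤ : ℕ∞) (fun p : ℝ × ℝ => θ p.1 p.2) (I ×ˢ J))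
    (hθeq : ∀ u ∈ I, ∀ v ∈ J,
      frameMatrix nu1 nu2 w1 w2 u v 2 1 * Real.cos (θ u v)
        + frameMatrix nu1 nu2 w1 w2 u v 2 0 * Real.sin (θ u v) = 0)
    (u0 v0 : ℝ) (hu0 : u0 ∈ I) (hv0 : v0 ∈ J)
    (ha : curvA g nu1 nu2 u0 = 0) (hat : curvA gt w1 w2 v0 = 0)
    (hdep : cross3 (mu3 nu1 nu2 u0) (mu3 w1 w2 v0) = 0) :
    ¬ HasD4PlusAt (fun p => g p.1 + gt p.2) (u0, v0) ∧
    ¬ HasD4MinusAt (fun p => g p.1 + gt p.2) (u0, v0) := by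
  constructor
  · intro h
    have hmodel : D4PlusModel = (fun p : ℝ × ℝ =>
        (![p.1*p.2, p.1^2 + (3:ℝ)*p.2^2, p.1^2*p.2 + (1:ℝ)*p.2^3] : V3)) := by
      funext p i
      fin_cases i <;> simp [D4PlusModel] <;> ring
    have h' : AEquivAt (fun p => g p.1 + gt p.2) (u0, v0)
        (fun p : ℝ × ℝ => (![p.1*p.2, p.1^2 + (3:ℝ)*p.2^2, p.1^2*p.2 + (1:ℝ)*p.2^3] : V3)) := by
      have := h
      unfold HasD4PlusAt at this
      rwa [hmodel] at this
    exact no_D4_aux I J hI hJ g nu1 nu2 gt w1 w2 hg hgt u0 v0 hu0 hv0 ha hat hdep 3 1 h'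
  · intro h
    have hmodel : D4MinusModel = (fun p : ℝ × ℝ =>
        (![p.1*p.2, p.1^2 + (-3:ℝ)*p.2^2, p.1^2*p.2 + (-1:ℝ)*p.2^3] : V3)) := by
      funext p i
      fin_cases i <;> simp [D4MinusModel] <;> ring
    have h' : AEquivAt (fun p => g p.1 + gt p.2) (u0, v0)
        (fun p : ℝ × ℝ => (![p.1*p.2, p.1^2 + (-3:ℝ)*p.2^2, p.1^2*p.2 + (-1:ℝ)*p.2^3] : V3)) := by
      have := h
      unfold HasD4MinusAt at this
      rwa [hmodel] at this
    exact no_D4_aux I J hI hJ g nu1 nu2 gt w1 w2 hg hgt u0 v0 hu0 hv0 ha hat hdep (-3) (-1) h' 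

end
end
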